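/- arXiv:2204.10660 — 7 statements merged into one kernel-verified Lean document; each statement's English description precedes it below -/
import Mathlib

section
/- If fₙ converges I*-α-uniformly equally to the zero function, then fₙ² converges I*-α-uniformly equally to the zero function. -/
open Filter

/-- An admissible ideal on ℕ: closed under finite unions and subsets,
and contains all singletons. -/
structure AdmissibleIdeal : Type where
  sets : Set (Set ℕ)
  union_mem : ∀ {A B : Set ℕ}, A ∈ sets → B ∈ sets → A ∪ B ∈ sets
  subset_mem : ∀ {A B : Set ℕ}, A ∈ sets → B ⊆ A → B ∈ sets
  singleton_mem : ∀ n : ℕ, {n} ∈ sets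

/-- The associated filter F(I) = { ℕ \ A : A ∈ I }. -/
def AdmissibleIdeal.dualFilter (I : AdmissibleIdeal) : Set (Set ℕ) :=
  {M | Mᶜ ∈ I.sets}

/-- (xₙ)_{n ∈ M} converges to x. -/
def ConvAlongTo {X : Type*} [MetricSpace X] (M : Set ℕ) (xs : ℕ → X) (x : X) : Prop :=
  ∀ δ > 0, ∃ N : ℕ, ∀ n ≥ N, n ∈ M → dist (xs n) x < δ

/-- (ε, M, n₀) witnesses that |{n ∈ M : |fₙ(xₙ) − g(x)| ≥ εₙ}| ≤ n₀ for every x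
and every sequence (xₙ)_{n∈M} → x. -/
def WitnessUE {X : Type*} [MetricSpace X]
    (f : ℕ → X → ℝ) (g : X → ℝ) (ε : ℕ → ℝ) (M : Set ℕ) (n₀ : ℕ) : Prop :=
  ∀ x : X, ∀ xs : ℕ → X, ConvAlongTo M xs x →
    ({n | n ∈ M ∧ ε n ≤ |f n (xs n) - g x|}).encard ≤ (n₀ : ℕ∞)

/-- I*-α-uniform equal convergence. -/
def IStarAlphaUE (I : AdmissibleIdeal) {X : Type*} [MetricSpace X]
    (f : ℕ → X → ℝ) (g : X → ℝ) : Prop :=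
  ∃ ε : ℕ → ℝ, (∀ n, 0 < ε n) ∧ Tendsto ε atTop (nhds 0) ∧
    ∃ M ∈ I.dualFilter, ∃ n₀ : ℕ, WitnessUE f g ε M n₀

/-- I*-α-strong uniform equal convergence. -/
def IStarAlphaSUE (I : AdmissibleIdeal) {X : Type*} [MetricSpace X]
    (f : ℕ → X → ℝ) (g : X → ℝ) : Prop :=
  ∃ ε : ℕ → ℝ, (∀ n, 0 < ε n) ∧ Summable ε ∧
    ∃ M ∈ I.dualFilter, ∃ n₀ : ℕ, WitnessUE f g ε M n₀

theorem WitnessUE.mono {X : Type*} [MetricSpace X] {f f' : ℕ → X → ℝ} {g g' : X → ℝ}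
    {ε ε' : ℕ → ℝ} {M : Set ℕ} {n₀ : ℕ} (hW : WitnessUE f g ε M n₀)
    (h : ∀ n y x, ε' n ≤ |f' n y - g' x| → ε n ≤ |f n y - g x|) :
    WitnessUE f' g' ε' M n₀ := by
  intro x xs hxs
  refine le_trans (Set.encard_le_encard ?_) (hW x xs hxs)
  exact fun n ⟨hn, hle⟩ => ⟨hn, h n (xs n) x hle⟩

theorem WitnessUE.sq_zero {X : Type*} [MetricSpace X] {f : ℕ → X → ℝ} {ε : ℕ → ℝ}
    {M : Set ℕ} {n₀ : ℕ} (hW : WitnessUE f (fun _ => 0) ε M n₀) :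
    WitnessUE (fun n x => f n x ^ 2) (fun _ => 0) (fun n => ε n ^ 2) M n₀ :=
  hW.mono fun n y _ hle => by
    rw [sub_zero, abs_pow] at hle
    rw [sub_zero]
    exact le_of_pow_le_pow_left₀ two_ne_zero (abs_nonneg _) hle

theorem ue_sq_zero (I : AdmissibleIdeal) {X : Type*} [MetricSpace X]
    (f : ℕ → X → ℝ)
    (h : IStarAlphaUE I f (fun _ => 0)) :
    IStarAlphaUE I (fun n x => (f n x) ^ 2) (fun _ => 0) := by
  obtain ⟨ε, hε_pos, hε_lim, M, hM, n₀, hW⟩ := h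
  refine ⟨fun n => ε n ^ 2, fun n => pow_pos (hε_pos n) 2, ?_, M, hM, n₀, hW.sq_zero⟩
  simpa using hε_lim.pow 2
end

section
/- If fₙ converges I*-α-uniformly equally to f, gₙ converges I*-α-uniformly equally to g, and a, b ∈ ℝ, then a·fₙ + b·gₙ converges I*-α-uniformly equally to a·f + b·g. -/
open Filter

/-! Shrinking `M` costs nothing: a sequence converging along the smaller set can be
redirected to the limit outside it, and then it converges along the larger one. Hence the
two witnesses can share the set `M₁ ∩ M₂`, where the exceptional indices of a sum lie in the
union of the exceptional sets of the summands. Scaling by `c` is absorbed by scaling the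
tolerances by `|c| + 1`, which keeps them positive even when `c = 0`. -/

theorem AdmissibleIdeal.inter_mem_dualFilter (I : AdmissibleIdeal) {M₁ M₂ : Set ℕ}
    (h₁ : M₁ ∈ I.dualFilter) (h₂ : M₂ ∈ I.dualFilter) : M₁ ∩ M₂ ∈ I.dualFilter := by
  show (M₁ ∩ M₂)ᶜ ∈ I.sets
  rw [Set.compl_inter]
  exact I.union_mem h₁ h₂

section

variable {X : Type*} [MetricSpace X]

theorem ConvAlongTo.piecewise {M : Set ℕ} [DecidablePred (· ∈ M)] {xs : ℕ → X} {x : X}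
    (h : ConvAlongTo M xs x) (M' : Set ℕ) : ConvAlongTo M' (M.piecewise xs fun _ => x) x := by
  intro δ hδ
  obtain ⟨N, hN⟩ := h δ hδ
  refine ⟨N, fun n hn _ => ?_⟩
  by_cases hnM : n ∈ M
  · simpa [hnM] using hN n hn hnM
  · simpa [hnM] using hδ

theorem WitnessUE.mono_s4 {f : ℕ → X → ℝ} {F : X → ℝ} {ε : ℕ → ℝ} {M M' : Set ℕ} {n₀ : ℕ}
    (h : WitnessUE f F ε M n₀) (hM : M' ⊆ M) : WitnessUE f F ε M' n₀ := by
  classical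
  intro x xs hxs
  refine le_trans (Set.encard_mono ?_) (h x _ (hxs.piecewise M))
  rintro n ⟨hn, hε⟩
  exact ⟨hM hn, by simpa [hn] using hε⟩

theorem WitnessUE.add {f g : ℕ → X → ℝ} {F G : X → ℝ} {ε₁ ε₂ : ℕ → ℝ} {M : Set ℕ}
    {n₁ n₂ : ℕ} (hf : WitnessUE f F ε₁ M n₁) (hg : WitnessUE g G ε₂ M n₂) :
    WitnessUE (fun n x => f n x + g n x) (fun x => F x + G x) (fun n => ε₁ n + ε₂ n) M
      (n₁ + n₂) := by
  intro x xs hxs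
  have hsub : {n | n ∈ M ∧ ε₁ n + ε₂ n ≤ |f n (xs n) + g n (xs n) - (F x + G x)|} ⊆
      {n | n ∈ M ∧ ε₁ n ≤ |f n (xs n) - F x|} ∪ {n | n ∈ M ∧ ε₂ n ≤ |g n (xs n) - G x|} := by
    rintro n ⟨hn, hε⟩
    by_contra! hsmall
    simp only [Set.mem_union, Set.mem_ofPred_eq, not_or, not_and, not_le] at hsmall
    have htri := abs_add_le (f n (xs n) - F x) (g n (xs n) - G x)
    rw [add_sub_add_comm] at hε
    linarith [hsmall.1 hn, hsmall.2 hn]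
  calc _ ≤ _ := Set.encard_mono hsub
    _ ≤ _ := Set.encard_union_le _ _
    _ ≤ (n₁ : ℕ∞) + n₂ := add_le_add (hf x xs hxs) (hg x xs hxs)
    _ = _ := by push_cast; rfl

theorem WitnessUE.const_mul {f : ℕ → X → ℝ} {F : X → ℝ} {ε : ℕ → ℝ} {M : Set ℕ} {n₀ : ℕ}
    (hε : ∀ n, 0 < ε n) (h : WitnessUE f F ε M n₀) (c : ℝ) :
    WitnessUE (fun n x => c * f n x) (fun x => c * F x) (fun n => (|c| + 1) * ε n) M n₀ := by
  intro x xs hxs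
  refine le_trans (Set.encard_mono ?_) (h x xs hxs)
  rintro n ⟨hn, hcε⟩
  refine ⟨hn, ?_⟩
  by_contra! hsmall
  rw [← mul_sub, abs_mul] at hcε
  nlinarith [abs_nonneg c, hε n]

theorem IStarAlphaUE.add {I : AdmissibleIdeal} {f g : ℕ → X → ℝ} {F G : X → ℝ}
    (hf : IStarAlphaUE I f F) (hg : IStarAlphaUE I g G) :
    IStarAlphaUE I (fun n x => f n x + g n x) (fun x => F x + G x) := by
  obtain ⟨ε₁, hε₁, hε₁0, M₁, hM₁, n₁, hw₁⟩ := hf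
  obtain ⟨ε₂, hε₂, hε₂0, M₂, hM₂, n₂, hw₂⟩ := hg
  refine ⟨fun n => ε₁ n + ε₂ n, fun n => add_pos (hε₁ n) (hε₂ n), by simpa using hε₁0.add hε₂0,
    M₁ ∩ M₂, I.inter_mem_dualFilter hM₁ hM₂, n₁ + n₂, ?_⟩
  exact (hw₁.mono_s4 Set.inter_subset_left).add (hw₂.mono_s4 Set.inter_subset_right)

theorem IStarAlphaUE.const_mul {I : AdmissibleIdeal} {f : ℕ → X → ℝ} {F : X → ℝ}
    (h : IStarAlphaUE I f F) (c : ℝ) :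
    IStarAlphaUE I (fun n x => c * f n x) (fun x => c * F x) := by
  obtain ⟨ε, hε, hε0, M, hM, n₀, hw⟩ := h
  exact ⟨fun n => (|c| + 1) * ε n, fun n => mul_pos (by positivity) (hε n),
    by simpa using hε0.const_mul (|c| + 1), M, hM, n₀, hw.const_mul hε c⟩

end

theorem ue_linear (I : AdmissibleIdeal) {X : Type*} [MetricSpace X]
    (f g : ℕ → X → ℝ) (F G : X → ℝ) (a b : ℝ)
    (hf : IStarAlphaUE I f F) (hg : IStarAlphaUE I g G) :
    IStarAlphaUE I (fun n x => a * f n x + b * g n x) (fun x => a * F x + b * G x) :=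
  (hf.const_mul a).add (hg.const_mul b)
end

section
/- If f and g are bounded functions, fₙ converges I*-α-uniformly equally to f, and gₙ converges I*-α-uniformly equally to g, then fₙ·gₙ converges I*-α-uniformly equally to f·g. -/
open Filter

/-! Writing `aₙ = fₙ(xₙ)`, `bₙ = gₙ(xₙ)`, the identity `aₙbₙ - FG = aₙ(bₙ - G) + G(aₙ - F)` with
`|aₙ| ≤ A + εₙ` shows that `|aₙbₙ - FG| ≥ (A + εₙ)δₙ + Bεₙ` forces `|aₙ - F| ≥ εₙ` or
`|bₙ - G| ≥ δₙ`; so on `M₁ ∩ M₂` there are at most `n₁ + n₂` exceptional indices. To apply the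
witness for `f` to a sequence converging only along `M₁ ∩ M₂`, it is first extended by its limit
off `M₂`. -/

open Set

theorem AdmissibleIdeal.inter_mem_dualFilter_s6 (I : AdmissibleIdeal) {M N : Set ℕ}
    (hM : M ∈ I.dualFilter) (hN : N ∈ I.dualFilter) : M ∩ N ∈ I.dualFilter := by
  show (M ∩ N)ᶜ ∈ I.sets
  rw [compl_inter]
  exact I.union_mem hM hN

section

variable {X : Type*} [MetricSpace X]

theorem ConvAlongTo.piecewise_const {M N : Set ℕ} {xs : ℕ → X} {x : X}
    [DecidablePred (· ∈ N)] (h : ConvAlongTo (M ∩ N) xs x) :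
    ConvAlongTo M (N.piecewise xs fun _ => x) x := by
  intro d hd
  obtain ⟨K, hK⟩ := h d hd
  refine ⟨K, fun n hnK hnM => ?_⟩
  by_cases hnN : n ∈ N
  · simpa [hnN] using hK n hnK ⟨hnM, hnN⟩
  · simpa [hnN] using hd

theorem WitnessUE.encard_inter_le {f : ℕ → X → ℝ} {F : X → ℝ} {ε : ℕ → ℝ} {M : Set ℕ}
    {n₀ : ℕ} (hW : WitnessUE f F ε M n₀) {N : Set ℕ} {xs : ℕ → X} {x : X}
    (hxs : ConvAlongTo (M ∩ N) xs x) :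
    {n | n ∈ M ∩ N ∧ ε n ≤ |f n (xs n) - F x|}.encard ≤ n₀ := by
  classical
  refine le_trans (encard_mono ?_) (hW x _ hxs.piecewise_const)
  rintro n ⟨⟨hnM, hnN⟩, hn⟩
  exact ⟨hnM, by simpa [hnN] using hn⟩

theorem abs_mul_sub_mul_lt {a b p q A B ε δ : ℝ} (ha : |a - p| < ε) (hb : |b - q| < δ)
    (hp : |p| ≤ A) (hq : |q| ≤ B) : |a * b - p * q| < (A + ε) * δ + B * ε := by
  have ha' : |a| ≤ A + ε := by
    linarith [abs_sub_abs_le_abs_sub a p]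
  have hAε : 0 < A + ε := by linarith [abs_nonneg p, (abs_nonneg (a - p)).trans_lt ha]
  calc |a * b - p * q| = |a * (b - q) + q * (a - p)| := by ring_nf
    _ ≤ |a| * |b - q| + |q| * |a - p| := by
      rw [← abs_mul, ← abs_mul]
      exact abs_add_le _ _
    _ < (A + ε) * δ + B * ε :=
      add_lt_add_of_lt_of_le (mul_lt_mul' ha' hb (abs_nonneg _) hAε)
        (mul_le_mul hq ha.le (abs_nonneg _) ((abs_nonneg q).trans hq))

theorem WitnessUE.mul {f g : ℕ → X → ℝ} {F G : X → ℝ}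
    {ε δ : ℕ → ℝ} {M₁ M₂ : Set ℕ} {n₁ n₂ : ℕ} {A B : ℝ}
    (hf : WitnessUE f F ε M₁ n₁) (hg : WitnessUE g G δ M₂ n₂)
    (hF : ∀ x, |F x| ≤ A) (hG : ∀ x, |G x| ≤ B) :
    WitnessUE (fun n x => f n x * g n x) (fun x => F x * G x)
      (fun n => (A + ε n) * δ n + B * ε n) (M₁ ∩ M₂) (n₁ + n₂) := by
  intro x xs hxs
  have hsub : {n | n ∈ M₁ ∩ M₂ ∧
        (A + ε n) * δ n + B * ε n ≤ |f n (xs n) * g n (xs n) - F x * G x|} ⊆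
      {n | n ∈ M₁ ∩ M₂ ∧ ε n ≤ |f n (xs n) - F x|} ∪
        {n | n ∈ M₂ ∩ M₁ ∧ δ n ≤ |g n (xs n) - G x|} := by
    rintro n ⟨hn, hle⟩
    by_contra h
    simp only [mem_union, mem_ofPred_eq, not_or, not_and, not_le] at h
    exact (abs_mul_sub_mul_lt (h.1 hn) (h.2 hn.symm) (hF x) (hG x)).not_ge hle
  calc _ ≤ _ := encard_mono hsub
    _ ≤ _ := encard_union_le _ _
    _ ≤ (n₁ : ℕ∞) + n₂ :=
      add_le_add (hf.encard_inter_le hxs) (hg.encard_inter_le (by rwa [inter_comm]))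
    _ = ((n₁ + n₂ : ℕ) : ℕ∞) := by norm_cast

end

theorem ue_mul (I : AdmissibleIdeal) {X : Type*} [MetricSpace X]
    (f g : ℕ → X → ℝ) (F G : X → ℝ)
    (hFb : ∃ C : ℝ, ∀ x, |F x| ≤ C) (hGb : ∃ C : ℝ, ∀ x, |G x| ≤ C)
    (hf : IStarAlphaUE I f F) (hg : IStarAlphaUE I g G) :
    IStarAlphaUE I (fun n x => f n x * g n x) (fun x => F x * G x) := by
  obtain ⟨ε, hε, hε0, M₁, hM₁, n₁, hW₁⟩ := hf
  obtain ⟨δ, hδ, hδ0, M₂, hM₂, n₂, hW₂⟩ := hg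
  obtain ⟨A, hA⟩ := hFb
  obtain ⟨B, hB⟩ := hGb
  -- A bound on `|F|` may be negative when `X` is empty; the new `εₙ` need `A, B ≥ 0`.
  have hA' : ∀ x, |F x| ≤ max A 0 := fun x => (hA x).trans (le_max_left _ _)
  have hB' : ∀ x, |G x| ≤ max B 0 := fun x => (hB x).trans (le_max_left _ _)
  have hpos : ∀ n, 0 < (max A 0 + ε n) * δ n + max B 0 * ε n := fun n => by
    have := hε n; have := hδ n; positivity
  have hlim : Tendsto (fun n => (max A 0 + ε n) * δ n + max B 0 * ε n) atTop (nhds 0) := by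
    simpa using ((tendsto_const_nhds.add hε0).mul hδ0).add (tendsto_const_nhds.mul hε0)
  exact ⟨_, hpos, hlim, M₁ ∩ M₂, I.inter_mem_dualFilter_s6 hM₁ hM₂, n₁ + n₂,
    hW₁.mul hW₂ hA' hB'⟩
end

section
/- Let Φ be a lattice of real-valued functions on X (Φ contains all constant functions and is closed under pointwise max and min). Then the class Φ^{I*-α-u.e.} of all I*-α-uniform equal limits of sequences from Φ is also a lattice. -/
open Filter

/-- Φ is a lattice of functions: contains all constants and is closed under
pointwise max and min. -/
def IsFnLattice {X : Type*} (Phi : Set (X → ℝ)) : Prop :=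
  (∀ c : ℝ, (fun _ => c) ∈ Phi) ∧
  (∀ f ∈ Phi, ∀ g ∈ Phi, (fun x => max (f x) (g x)) ∈ Phi ∧ (fun x => min (f x) (g x)) ∈ Phi)

/-- The class of all I*-α-uniform equal limits of sequences from Φ. -/
def ueClosure (I : AdmissibleIdeal) {X : Type*} [MetricSpace X]
    (Phi : Set (X → ℝ)) : Set (X → ℝ) :=
  {f | ∃ fs : ℕ → (X → ℝ), (∀ n, fs n ∈ Phi) ∧ IStarAlphaUE I fs f}

/- `max` and `min` are 1-Lipschitz for the max-distance on `ℝ × ℝ`. Hence, if `fₙ → f` and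
`gₙ → g` with exceptional bounds `εₙ`, `ε'ₙ`, an index where `op (fₙ xₙ) (gₙ xₙ)` misses
`op (f x) (g x)` by at least `max εₙ ε'ₙ` is one where `fₙ xₙ` misses `f x` by at least `εₙ` or
`gₙ xₙ` misses `g x` by at least `ε'ₙ`; so on `M ∩ M'` there are at most `n₀ + n₀'` of them.
Constants are limits of constant sequences, with no exceptional index at all. -/

namespace AdmissibleIdeal

variable (I : AdmissibleIdeal)

theorem univ_mem_dualFilter : Set.univ ∈ I.dualFilter := by
  show Set.univᶜ ∈ I.sets
  simpa using I.subset_mem (I.singleton_mem 0) (Set.empty_subset _)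

theorem inter_mem_dualFilter_s9 {M M' : Set ℕ} (hM : M ∈ I.dualFilter) (hM' : M' ∈ I.dualFilter) :
    M ∩ M' ∈ I.dualFilter := by
  show (M ∩ M')ᶜ ∈ I.sets
  rw [Set.compl_inter]
  exact I.union_mem hM hM'

end AdmissibleIdeal

section

variable {X : Type*} [MetricSpace X]

theorem ConvAlongTo.mono {M S : Set ℕ} {xs : ℕ → X} {x : X} (h : ConvAlongTo M xs x)
    (hS : S ⊆ M) : ConvAlongTo S xs x := fun δ hδ =>
  (h δ hδ).imp fun _ hN n hn hnS => hN n hn (hS hnS)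

/-- Redefine the terms outside `M` to be `x`. -/
theorem ConvAlongTo.exists_univ {M : Set ℕ} {xs : ℕ → X} {x : X} (h : ConvAlongTo M xs x) :
    ∃ ys : ℕ → X, (∀ n ∈ M, ys n = xs n) ∧ ConvAlongTo Set.univ ys x := by
  classical
  refine ⟨M.piecewise xs fun _ => x, fun n hn => M.piecewise_eq_of_mem _ _ hn, fun δ hδ => ?_⟩
  obtain ⟨N, hN⟩ := h δ hδ
  refine ⟨N, fun n hn _ => ?_⟩
  by_cases hnM : n ∈ M
  · rw [M.piecewise_eq_of_mem _ _ hnM]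
    exact hN n hn hnM
  · rw [M.piecewise_eq_of_notMem _ _ hnM, dist_self]
    exact hδ

theorem witnessUE_const (c : ℝ) {ε : ℕ → ℝ} (hε : ∀ n, 0 < ε n) (M : Set ℕ) :
    WitnessUE (fun _ _ => c) (fun _ : X => c) ε M 0 := by
  intro _ _ _
  simp [fun n => (hε n).not_ge]

theorem WitnessUE.comp₂ {op : ℝ → ℝ → ℝ} (hop : ∀ a b c d, |op a b - op c d| ≤ max |a - c| |b - d|)
    {fs gs : ℕ → X → ℝ} {f g : X → ℝ} {ε ε' : ℕ → ℝ} {M M' : Set ℕ} {n₀ n₀' : ℕ}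
    (hf : WitnessUE fs f ε M n₀) (hg : WitnessUE gs g ε' M' n₀') :
    WitnessUE (fun n x => op (fs n x) (gs n x)) (fun x => op (f x) (g x))
      (fun n => max (ε n) (ε' n)) (M ∩ M') (n₀ + n₀') := by
  intro x xs hxs
  -- the witnesses for `f` and `g` only see sequences converging along `M` resp. `M'`
  obtain ⟨ys, hys, hys_conv⟩ := hxs.exists_univ
  have hsub : {n | n ∈ M ∩ M' ∧
        max (ε n) (ε' n) ≤ |op (fs n (xs n)) (gs n (xs n)) - op (f x) (g x)|}
      ⊆ {n | n ∈ M ∧ ε n ≤ |fs n (ys n) - f x|} ∪ {n | n ∈ M' ∧ ε' n ≤ |gs n (ys n) - g x|} := by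
    rintro n ⟨hnM, hle⟩
    simp only [Set.mem_union, Set.mem_ofPred_eq, hys n hnM]
    by_contra! hlt
    exact (hle.trans (hop ..)).not_gt (max_lt_max (hlt.1 hnM.1) (hlt.2 hnM.2))
  calc _ ≤ _ := Set.encard_mono hsub
    _ ≤ _ + _ := Set.encard_union_le _ _
    _ ≤ n₀ + n₀' := add_le_add (hf x ys (hys_conv.mono (Set.subset_univ M)))
        (hg x ys (hys_conv.mono (Set.subset_univ M')))
    _ = ((n₀ + n₀' : ℕ) : ℕ∞) := by push_cast; rfl

variable {I : AdmissibleIdeal}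

theorem IStarAlphaUE.comp₂ {op : ℝ → ℝ → ℝ}
    (hop : ∀ a b c d, |op a b - op c d| ≤ max |a - c| |b - d|)
    {fs gs : ℕ → X → ℝ} {f g : X → ℝ} (hf : IStarAlphaUE I fs f) (hg : IStarAlphaUE I gs g) :
    IStarAlphaUE I (fun n x => op (fs n x) (gs n x)) (fun x => op (f x) (g x)) := by
  obtain ⟨ε, hε, hε0, M, hM, n₀, hW⟩ := hf
  obtain ⟨ε', hε', hε'0, M', hM', n₀', hW'⟩ := hg
  exact ⟨_, fun n => lt_max_of_lt_left (hε n), by simpa using hε0.max hε'0,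
    M ∩ M', I.inter_mem_dualFilter_s9 hM hM', n₀ + n₀', hW.comp₂ hop hW'⟩

theorem const_mem_ueClosure {Phi : Set (X → ℝ)} {c : ℝ} (hc : (fun _ => c) ∈ Phi) :
    (fun _ => c) ∈ ueClosure I Phi :=
  ⟨fun _ _ => c, fun _ => hc, fun n => 1 / (n + 1), fun _ => Nat.one_div_pos_of_nat,
    tendsto_one_div_add_atTop_nhds_zero_nat, Set.univ, I.univ_mem_dualFilter, 0,
    witnessUE_const c (fun _ => Nat.one_div_pos_of_nat) _⟩

theorem comp₂_mem_ueClosure {Phi : Set (X → ℝ)} {op : ℝ → ℝ → ℝ}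
    (hop : ∀ a b c d, |op a b - op c d| ≤ max |a - c| |b - d|)
    (hPhi : ∀ p ∈ Phi, ∀ q ∈ Phi, (fun x => op (p x) (q x)) ∈ Phi)
    {f g : X → ℝ} (hf : f ∈ ueClosure I Phi) (hg : g ∈ ueClosure I Phi) :
    (fun x => op (f x) (g x)) ∈ ueClosure I Phi := by
  obtain ⟨fs, hfs, hf⟩ := hf
  obtain ⟨gs, hgs, hg⟩ := hg
  exact ⟨_, fun n => hPhi _ (hfs n) _ (hgs n), hf.comp₂ hop hg⟩

end

theorem ueClosure_lattice (I : AdmissibleIdeal) {X : Type*} [MetricSpace X]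
    (Phi : Set (X → ℝ)) (hPhi : IsFnLattice Phi) :
    IsFnLattice (ueClosure I Phi) :=
  ⟨fun c => const_mem_ueClosure (hPhi.1 c), fun _ hf _ hg =>
    ⟨comp₂_mem_ueClosure abs_max_sub_max_le_max (fun p hp q hq => (hPhi.2 p hp q hq).1) hf hg,
      comp₂_mem_ueClosure abs_min_sub_min_le_max (fun p hp q hq => (hPhi.2 p hp q hq).2) hf hg⟩⟩
end

section
/- Let h : X → Y be a uniform homeomorphism between metric spaces, and let F = (fₙ), fₙ : X → X, and G = (gₙ), gₙ : Y → Y, be uniformly h-conjugate (gₙ ∘ h = h ∘ fₙ for all n). If F is I-exhaustive on X, then G is I-exhaustive on Y. -/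
open Filter

/-- (fₙ) is I-exhaustive at x. -/
def IExhaustiveAt (I : AdmissibleIdeal) {X : Type*} [MetricSpace X]
    (f : ℕ → X → X) (x : X) : Prop :=
  ∀ ε > 0, ∃ δ > 0, ∃ A ∈ I.sets,
    ∀ n ∉ A, ∀ y : X, dist x y < δ → dist (f n x) (f n y) < ε

theorem IExhaustiveAt.of_eq_comp {I : AdmissibleIdeal} {X Y : Type*} [MetricSpace X]
    [MetricSpace Y] {f : ℕ → X → X} {g : ℕ → Y → Y} {φ : Y → X} {ψ : X → Y} {y : Y}
    (hf : IExhaustiveAt I f (φ y)) (hφ : ContinuousAt φ y) (hψ : UniformContinuous ψ)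
    (hg : ∀ n y, g n y = ψ (f n (φ y))) :
    IExhaustiveAt I g y := by
  intro ε hε
  obtain ⟨η, hη, hψη⟩ := Metric.uniformContinuous_iff.mp hψ ε hε
  obtain ⟨δ, hδ, A, hA, hfδ⟩ := hf η hη
  obtain ⟨δ', hδ', hφδ⟩ := Metric.continuousAt_iff.mp hφ δ hδ
  refine ⟨δ', hδ', A, hA, fun n hn y' hy' => ?_⟩
  have hφy' : dist (φ y) (φ y') < δ := dist_comm (φ y) _ ▸ hφδ (dist_comm y y' ▸ hy')
  rw [hg, hg]
  exact hψη (hfδ n hn _ hφy')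

theorem exhaustive_of_conjugate (I : AdmissibleIdeal)
    {X Y : Type*} [MetricSpace X] [MetricSpace Y]
    (h : X ≃ Y) (huc : UniformContinuous (h : X → Y))
    (huc' : UniformContinuous (h.symm : Y → X))
    (f : ℕ → X → X) (g : ℕ → Y → Y)
    (hconj : ∀ n : ℕ, ∀ x : X, g n (h x) = h (f n x))
    (hex : ∀ x : X, IExhaustiveAt I f x) :
    ∀ y : Y, IExhaustiveAt I g y := by
  intro y
  have hg : ∀ n y, g n y = h (f n (h.symm y)) := fun n y => by
    simpa using hconj n (h.symm y)
  exact (hex (h.symm y)).of_eq_comp huc'.continuous.continuousAt huc hg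
end

section
/- Let h : X → Y be a uniform homeomorphism between metric spaces, F = (fₙ) self-maps of X and G = (gₙ) self-maps of Y uniformly h-conjugate, and f : X → X, g : Y → Y with g ∘ h = h ∘ f. Then (fₙ) converges I-uniformly to f if and only if (gₙ) converges I-uniformly to g. -/
open Filter

/-- I-uniform convergence of a sequence of self-maps. -/
def IUnifConv (I : AdmissibleIdeal) {X : Type*} [MetricSpace X]
    (f : ℕ → X → X) (F : X → X) : Prop :=
  ∀ ε > 0, ∃ A ∈ I.sets, ∀ n ∉ A, ∀ x : X, dist (f n x) (F x) < ε

open Function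

theorem IUnifConv.of_semiconj {I : AdmissibleIdeal} {X Y : Type*} [MetricSpace X] [MetricSpace Y]
    {φ : X → Y} (hφ : UniformContinuous φ) (hφs : Surjective φ)
    {f : ℕ → X → X} {g : ℕ → Y → Y} {F : X → X} {G : Y → Y}
    (hfg : ∀ n, Semiconj φ (f n) (g n)) (hFG : Semiconj φ F G) (hf : IUnifConv I f F) :
    IUnifConv I g G := by
  intro ε hε
  obtain ⟨δ, hδ, hφδ⟩ := Metric.uniformContinuous_iff.mp hφ ε hε
  obtain ⟨A, hA, hfA⟩ := hf δ hδ
  refine ⟨A, hA, fun n hn y => ?_⟩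
  obtain ⟨x, rfl⟩ := hφs y
  rw [← hfg n x, ← hFG x]
  exact hφδ (hfA n hn x)

theorem iunif_iff_of_conjugate (I : AdmissibleIdeal)
    {X Y : Type*} [MetricSpace X] [MetricSpace Y]
    (h : X ≃ Y) (huc : UniformContinuous (h : X → Y))
    (huc' : UniformContinuous (h.symm : Y → X))
    (f : ℕ → X → X) (g : ℕ → Y → Y) (F : X → X) (G : Y → Y)
    (hconj : ∀ n : ℕ, ∀ x : X, g n (h x) = h (f n x))
    (hconjFG : ∀ x : X, G (h x) = h (F x)) :
    IUnifConv I f F ↔ IUnifConv I g G := by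
  have hfg : ∀ n, Semiconj h (f n) (g n) := fun n x => (hconj n x).symm
  have hFG : Semiconj h F G := fun x => (hconjFG x).symm
  exact ⟨IUnifConv.of_semiconj huc h.surjective hfg hFG,
    IUnifConv.of_semiconj huc' h.symm.surjective
      (fun n => (hfg n).inverse_left h.left_inv h.right_inv)
      (hFG.inverse_left h.left_inv h.right_inv)⟩
end

section
/- Let F = (fₙ) and G = (gₙ) be h-conjugate via a homeomorphism h, and f, g be h-conjugate (g ∘ h = h ∘ f). If (fₙ) converges I-pointwise to f, then (gₙ) converges I-pointwise to g. -/
open Filter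

/-- I-convergence of a sequence in a metric space. -/
def IConv (I : AdmissibleIdeal) {X : Type*} [MetricSpace X] (x : ℕ → X) (a : X) : Prop :=
  ∀ ε > 0, {n : ℕ | ε ≤ dist (x n) a} ∈ I.sets

theorem IConv.comp_continuousAt {I : AdmissibleIdeal} {X Y : Type*} [MetricSpace X]
    [MetricSpace Y] {x : ℕ → X} {a : X} (hx : IConv I x a) {φ : X → Y} (hφ : ContinuousAt φ a) :
    IConv I (fun n => φ (x n)) (φ a) := by
  intro ε hε
  obtain ⟨δ, hδ, hφδ⟩ := Metric.continuousAt_iff.mp hφ ε hε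
  exact I.subset_mem (hx δ hδ) fun n hn => not_lt.mp fun hlt => (hφδ hlt).not_ge hn

theorem ipointwise_of_conjugate (I : AdmissibleIdeal)
    {X Y : Type*} [MetricSpace X] [MetricSpace Y]
    (h : X ≃ₜ Y)
    (f : ℕ → X → X) (g : ℕ → Y → Y) (F : X → X) (G : Y → Y)
    (hconj : ∀ n : ℕ, ∀ x : X, g n (h x) = h (f n x))
    (hconjFG : ∀ x : X, G (h x) = h (F x))
    (hpt : ∀ x : X, IConv I (fun n => f n x) (F x)) :
    ∀ y : Y, IConv I (fun n => g n y) (G y) := by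
  intro y
  have hx := (hpt (h.symm y)).comp_continuousAt h.continuous.continuousAt
  simpa only [← hconj, ← hconjFG, h.apply_symm_apply] using hx
end
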